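/- Let m ≥ 0 and let n, k be natural numbers with 0 ≤ k, n < 5^m. Then for all integers i, j with 0 ≤ j ≤ i ≤ 4, the prime 5 divides the fibonomial coefficient C(n + i·5^m, k + j·5^m)_F if and only if 5 divides C(n, k)_F. -/

import Mathlib

/-- The fibotorial `n!_F = F_n · F_{n-1} ⋯ F_1`, with `0!_F = 1`. -/
def fibotorial (n : ℕ) : ℕ := ∏ i ∈ Finset.range n, Nat.fib (i + 1)

/-- The fibonomial coefficient `C(n,k)_F = n!_F / (k!_F · (n-k)!_F)` for `k ≤ n`,
and `0` otherwise. -/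
def fibnomial (n k : ℕ) : ℕ :=
  if k ≤ n then fibotorial n / (fibotorial k * fibotorial (n - k)) else 0

/-!
The 5-adic valuation of `F_n` equals that of `n`. Indeed
`F_{5n} = 5 F_n (5 F_n⁴ + 5 (-1)ⁿ F_n² + 1)` contributes exactly one factor `5`, and `5 ∣ F_n`
forces `5 ∣ n` because `gcd(F_n, F_5) = F_{gcd(n, 5)}`. Hence `n!_F` and `n!`, and then `C(n,k)_F`
and `C(n,k)`, have the same 5-adic valuation, which reduces the statement to binomial coefficients.
There Lucas' theorem gives `C(n + i·5^m, k + j·5^m) ≡ C(i,j) · C(n,k) (mod 5)`, and `C(i,j)` is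
prime to `5` for `j ≤ i ≤ 4`.
-/

namespace Int

theorem fib_sub_one (n : ℤ) : fib (n - 1) = fib (n + 1) - fib n := by
  have h := fib_add_two (n - 1)
  rw [sub_add_cancel, show n - 1 + 2 = n + 1 by ring] at h
  linarith

theorem fib_five_mul (n : ℤ) :
    fib (5 * n) = fib n * (25 * fib n ^ 4 + 25 * (-1) ^ n.natAbs * fib n ^ 2 + 5) := by
  have cassini := fib_succ_mul_fib_pred_sub_fib_sq n
  rw [fib_sub_one] at cassini
  have hsign : ((-1 : ℤ) ^ n.natAbs) ^ 2 = 1 := by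
    rw [← pow_mul, mul_comm, pow_mul, neg_one_sq, one_pow]
  have h4 := fib_sub_one (2 * (2 * n))
  have h5 := fib_add (2 * (2 * n)) n
  simp only [fib_two_mul, fib_two_mul_add_one] at h4 h5
  rw [show 5 * n = 2 * (2 * n) + n by ring, h5, h4]
  -- With `D = F_{n+1}² - F_{n+1} F_n - F_n²` one has `F_{5n} = F_n (25 F_n⁴ + 25 D F_n² + 5 D²)`
  -- as polynomials in `F_n, F_{n+1}`, and Cassini says `D = (-1)^|n|`.
  linear_combination (25 * fib n ^ 3 + 5 * fib n *
    (fib (n + 1) ^ 2 - fib n * fib (n + 1) - fib n ^ 2 + (-1) ^ n.natAbs)) * cassini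
    + 5 * fib n * hsign

end Int

namespace Nat

instance fact_prime_five : Fact (Nat.Prime 5) := ⟨prime_five⟩

theorem five_dvd_fib_iff {n : ℕ} : 5 ∣ fib n ↔ 5 ∣ n := by
  refine ⟨fun h => ?_, fun h => fib_dvd 5 n h⟩
  have hgcd : fib (gcd n 5) = 5 := by
    rw [fib_gcd, show fib 5 = 5 from rfl, gcd_eq_right h]
  rcases prime_five.eq_one_or_self_of_dvd _ (gcd_dvd_right n 5) with h1 | h5
  · simp [h1] at hgcd
  · exact h5 ▸ gcd_dvd_left n 5

theorem padicValNat_five_fib_five_mul {n : ℕ} (hn : n ≠ 0) :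
    padicValNat 5 (fib (5 * n)) = padicValNat 5 (fib n) + 1 := by
  set u : ℤ := 5 * fib n ^ 4 + 5 * (-1) ^ n * fib n ^ 2 + 1
  have hfib : (fib (5 * n) : ℤ) = fib n * u * (5 : ℕ) := by
    rw [← Int.fib_natCast, Nat.cast_mul, Nat.cast_ofNat, Int.fib_five_mul, Int.natAbs_natCast,
      Int.fib_natCast]
    ring
  have hu : ¬ (5 : ℤ) ∣ u := by
    rw [Int.dvd_add_right ⟨fib n ^ 4 + (-1) ^ n * fib n ^ 2, by ring⟩]
    decide
  have hfn : (fib n : ℤ) ≠ 0 := by exact_mod_cast (fib_pos.2 (pos_of_ne_zero hn)).ne'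
  have hu0 : u ≠ 0 := fun h => hu (h ▸ dvd_zero _)
  rw [← padicValInt.of_nat, hfib, padicValInt_mul_eq_succ _ (mul_ne_zero hfn hu0),
    padicValInt.mul hfn hu0, padicValInt.eq_zero_of_not_dvd hu, padicValInt.of_nat, add_zero]

theorem padicValNat_five_fib (n : ℕ) : padicValNat 5 (fib n) = padicValNat 5 n := by
  induction n using Nat.strong_induction_on with
  | _ n ih =>
    by_cases h5 : 5 ∣ n
    · obtain ⟨m, rfl⟩ := h5
      rcases eq_or_ne m 0 with rfl | hm
      · simp
      rw [padicValNat_five_fib_five_mul hm, ih m (by omega), padicValNat.mul (by norm_num) hm,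
        padicValNat_self, add_comm]
    · rw [padicValNat.eq_zero_of_not_dvd (five_dvd_fib_iff.not.2 h5),
        padicValNat.eq_zero_of_not_dvd h5]

end Nat

open Nat

theorem fibotorial_zero : fibotorial 0 = 1 := rfl

theorem fibotorial_succ (n : ℕ) : fibotorial (n + 1) = fibotorial n * fib (n + 1) :=
  Finset.prod_range_succ _ _

theorem fibotorial_ne_zero (n : ℕ) : fibotorial n ≠ 0 :=
  Finset.prod_ne_zero_iff.2 fun i _ => (fib_pos.2 i.succ_pos).ne'

theorem padicValNat_five_fibotorial (n : ℕ) :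
    padicValNat 5 (fibotorial n) = padicValNat 5 n ! := by
  induction n with
  | zero => rfl
  | succ n ih =>
    rw [fibotorial_succ, factorial_succ, padicValNat.mul (fibotorial_ne_zero n)
      (fib_pos.2 n.succ_pos).ne', padicValNat.mul n.succ_ne_zero (factorial_ne_zero n), ih,
      padicValNat_five_fib, add_comm]

theorem fibotorial_mul_fibotorial_dvd_fibotorial_add (a b : ℕ) :
    fibotorial a * fibotorial b ∣ fibotorial (a + b) := by
  induction h : a + b generalizing a b with
  | zero => simp_all [fibotorial_zero]
  | succ n ih =>
    rcases a with _ | a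
    · simp [fibotorial_zero, ← h]
    rcases b with _ | b
    · simp [fibotorial_zero, ← h]
    have hfib : fib (n + 1) = fib a * fib (b + 1) + fib (a + 1) * fib (b + 2) := by
      rw [← fib_add]; congr 1; omega
    have hleft : fibotorial (a + 1) * fibotorial b ∣ fibotorial n := ih _ _ (by omega)
    have hright : fibotorial a * fibotorial (b + 1) ∣ fibotorial n := ih _ _ (by omega)
    rw [fibotorial_succ n, hfib, mul_add]
    apply dvd_add
    · rw [fibotorial_succ b, ← mul_assoc]
      exact mul_dvd_mul hleft (dvd_mul_left _ _)
    · rw [fibotorial_succ a, mul_right_comm]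
      exact mul_dvd_mul hright (dvd_mul_right _ _)

theorem fibnomial_mul_fibotorial_mul_fibotorial {n k : ℕ} (hk : k ≤ n) :
    fibnomial n k * (fibotorial k * fibotorial (n - k)) = fibotorial n := by
  rw [fibnomial, if_pos hk]
  apply Nat.div_mul_cancel
  simpa [Nat.add_sub_cancel' hk] using fibotorial_mul_fibotorial_dvd_fibotorial_add k (n - k)

theorem fibnomial_ne_zero {n k : ℕ} (hk : k ≤ n) : fibnomial n k ≠ 0 :=
  left_ne_zero_of_mul (fibnomial_mul_fibotorial_mul_fibotorial hk ▸ fibotorial_ne_zero n)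

theorem padicValNat_five_fibnomial {n k : ℕ} (hk : k ≤ n) :
    padicValNat 5 (fibnomial n k) = padicValNat 5 (n.choose k) := by
  have hF := congrArg (padicValNat 5) (fibnomial_mul_fibotorial_mul_fibotorial hk)
  have hC := congrArg (padicValNat 5) (choose_mul_factorial_mul_factorial hk)
  rw [padicValNat.mul (fibnomial_ne_zero hk) (mul_ne_zero (fibotorial_ne_zero _)
      (fibotorial_ne_zero _)), padicValNat.mul (fibotorial_ne_zero _) (fibotorial_ne_zero _),
    padicValNat_five_fibotorial, padicValNat_five_fibotorial, padicValNat_five_fibotorial] at hF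
  rw [padicValNat.mul (mul_ne_zero (choose_ne_zero hk) (factorial_ne_zero _))
      (factorial_ne_zero _), padicValNat.mul (choose_ne_zero hk) (factorial_ne_zero _)] at hC
  omega

theorem five_dvd_fibnomial_iff (n k : ℕ) : 5 ∣ fibnomial n k ↔ 5 ∣ n.choose k := by
  rcases le_or_gt k n with hk | hk
  · rw [dvd_iff_padicValNat_ne_zero (fibnomial_ne_zero hk),
      dvd_iff_padicValNat_ne_zero (choose_ne_zero hk), padicValNat_five_fibnomial hk]
  · simp [fibnomial, hk.not_ge, choose_eq_zero_of_lt hk]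

namespace Nat

theorem add_mul_pow_div_pow_mod {p m t : ℕ} (hp : 0 < p) (ht : t < m) (n i : ℕ) :
    (n + i * p ^ m) / p ^ t % p = n / p ^ t % p := by
  obtain ⟨s, rfl⟩ := Nat.exists_eq_add_of_lt ht
  rw [show i * p ^ (t + s + 1) = i * p ^ s * p * p ^ t by ring,
    add_mul_div_right _ _ (pow_pos hp t), add_mul_mod_self_right]

theorem choose_add_mul_pow_modEq {p m n k : ℕ} [Fact p.Prime] (hn : n < p ^ m) (hk : k < p ^ m)
    (i j : ℕ) : (n + i * p ^ m).choose (k + j * p ^ m) ≡ i.choose j * n.choose k [MOD p] := by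
  have hp : 0 < p := Fact.out (p := p.Prime) |>.pos
  have hdiv : ∀ {a}, a < p ^ m → ∀ b, (a + b * p ^ m) / p ^ m = b := fun ha b => by
    rw [add_mul_div_right _ _ (pow_pos hp m), div_eq_of_lt ha, zero_add]
  rw [← Int.natCast_modEq_iff, cast_mul]
  calc ((n + i * p ^ m).choose (k + j * p ^ m) : ℤ)
      ≡ i.choose j * ∏ t ∈ Finset.range m, ((n / p ^ t % p).choose (k / p ^ t % p) : ℤ)
          [ZMOD p] := by
        convert Choose.choose_modEq_choose_mul_prod_range_choose (p := p) m using 3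
        · rw [hdiv hn, hdiv hk]
        · rw [cast_prod]
          refine Finset.prod_congr rfl fun t ht => ?_
          rw [add_mul_pow_div_pow_mod hp (Finset.mem_range.1 ht),
            add_mul_pow_div_pow_mod hp (Finset.mem_range.1 ht)]
    _ ≡ i.choose j * n.choose k [ZMOD p] :=
        (Choose.choose_modEq_prod_range_choose hn hk).symm.mul_left _

theorem Prime.not_dvd_choose_of_lt {p i j : ℕ} (hp : p.Prime) (hi : i < p) (hj : j ≤ i) :
    ¬ p ∣ i.choose j := fun h =>
  hi.not_ge <| (hp.dvd_factorial).1 <| (choose_mul_factorial_mul_factorial hj) ▸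
    dvd_mul_of_dvd_left (dvd_mul_of_dvd_left h _) _

theorem Prime.dvd_choose_add_mul_pow_iff {p m n k i j : ℕ} (hp : p.Prime) (hn : n < p ^ m)
    (hk : k < p ^ m) (hi : i < p) (hj : j ≤ i) :
    p ∣ (n + i * p ^ m).choose (k + j * p ^ m) ↔ p ∣ n.choose k := by
  have : Fact p.Prime := ⟨hp⟩
  rw [(choose_add_mul_pow_modEq hn hk i j).dvd_iff dvd_rfl, hp.dvd_mul,
    or_iff_right (hp.not_dvd_choose_of_lt hi hj)]

end Nat

theorem five_dvd_fibnomial_shift (m n k : ℕ) (hn : n < 5 ^ m) (hk : k < 5 ^ m)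
    (i j : ℕ) (hji : j ≤ i) (hi : i ≤ 4) :
    5 ∣ fibnomial (n + i * 5 ^ m) (k + j * 5 ^ m) ↔ 5 ∣ fibnomial n k := by
  rw [five_dvd_fibnomial_iff, five_dvd_fibnomial_iff]
  exact prime_five.dvd_choose_add_mul_pow_iff hn hk (by omega) hji
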